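/- arXiv:2208.12438 — 10 statements merged into one kernel-verified Lean document; each statement's English description precedes it below -/
import Mathlib

section
/- Let G = (V,E) be a finite simple graph with n vertices such that G contains no isolated vertices and no equivalent vertices, i.e., there is no edge {x,y} of G with N[x] = N[y]. If (C_1, …, C_k) is an edge clique cover of G, then n < 2^k. -/
/-- An edge clique cover of a simple graph `G`: a finite indexed family of cliques
such that every edge of `G` has both endpoints in some member of the family. -/
def IsEdgeCliqueCover {V : Type*} (G : SimpleGraph V) {k : ℕ} (C : Fin k → Finset V) : Prop :=
  (∀ l, G.IsClique (C l : Set V)) ∧ ∀ ⦃x y : V⦄, G.Adj x y → ∃ l, x ∈ C l ∧ y ∈ C l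

/-- Gyárfás' bound: if a finite simple graph `G` with `n` vertices has no isolated
vertices and no pair of adjacent vertices with equal closed neighbourhoods, then any
edge clique cover `(C_1, …, C_k)` of `G` satisfies `n < 2 ^ k`. -/
theorem card_lt_two_pow_of_edgeCliqueCover {V : Type*} [Fintype V] (G : SimpleGraph V)
    (hiso : ∀ x : V, (G.neighborSet x).Nonempty)
    (heqv : ∀ ⦃x y : V⦄, G.Adj x y →
      G.neighborSet x ∪ {x} ≠ G.neighborSet y ∪ {y})
    {k : ℕ} (C : Fin k → Finset V) (hC : IsEdgeCliqueCover G C) :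
    Fintype.card V < 2 ^ k := by
  obtain ⟨hclique, hcover⟩ := hC
  classical
  set f : V → Finset (Fin k) := fun x => Finset.univ.filter (fun l => x ∈ C l) with hf
  have hmem : ∀ {x y : V}, f x = f y → ∀ {z : V}, G.Adj x z → z ≠ y → G.Adj y z := by
    intro x y hxy z hxz hzy
    obtain ⟨l, hxl, hzl⟩ := hcover hxz
    have hyl : y ∈ C l := by
      have : l ∈ f x := by simp [hf, hxl]
      rw [hxy] at this
      simpa [hf] using this
    exact hclique l hyl hzl hzy.symm
  have hinj : Function.Injective f := by
    intro x y hxy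
    by_contra hne
    obtain ⟨z, hz⟩ := hiso x
    obtain ⟨l, hxl, hzl⟩ := hcover hz
    have hyl : y ∈ C l := by
      have : l ∈ f x := by simp [hf, hxl]
      rw [hxy] at this
      simpa [hf] using this
    have hadj : G.Adj x y := hclique l hxl hyl hne
    apply heqv hadj
    ext w
    simp only [Set.mem_union, SimpleGraph.mem_neighborSet, Set.mem_singleton_iff]
    constructor
    · rintro (hw | rfl)
      · rcases eq_or_ne w y with rfl | hwy
        · exact Or.inr rfl
        · exact Or.inl (hmem hxy hw hwy)
      · exact Or.inl hadj.symm
    · rintro (hw | rfl)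
      · rcases eq_or_ne w x with rfl | hwx
        · exact Or.inr rfl
        · exact Or.inl (hmem hxy.symm hw hwx)
      · exact Or.inl hadj
  have hnonempty : (∅ : Finset (Fin k)) ∉ Set.range f := by
    rintro ⟨x, hx⟩
    obtain ⟨z, hz⟩ := hiso x
    obtain ⟨l, hxl, _⟩ := hcover hz
    have : l ∈ f x := by simp [hf, hxl]
    rw [hx] at this
    simp at this
  calc Fintype.card V < Fintype.card (Finset (Fin k)) :=
        Fintype.card_lt_of_injective_of_notMem f hinj hnonempty
    _ = 2 ^ k := by simp
end

section
/- Let G = (V,E) be a finite simple graph with degeneracy d and independence number α such that G contains no isolated vertices and no equivalent vertices, i.e., there is no edge {x,y} of G with N[x] = N[y]. If (C_1, …, C_k) is an edge clique cover of G, then d + α < 2^k. -/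
/-- The degeneracy of `G`: the least `d` such that every nonempty set `S` of vertices
contains a vertex having at most `d` neighbours inside `S`. -/
noncomputable def degeneracy {V : Type*} [Fintype V] (G : SimpleGraph V) : ℕ :=
  sInf {d : ℕ | ∀ S : Finset V, S.Nonempty → ∃ v ∈ S, ((S : Set V) ∩ G.neighborSet v).ncard ≤ d}

/-- The independence number of `G`: the maximum size of a set of pairwise
non-adjacent vertices. -/
noncomputable def indepNum {V : Type*} [Fintype V] (G : SimpleGraph V) : ℕ :=
  sSup {n : ℕ | ∃ s : Finset V, s.card = n ∧ (s : Set V).Pairwise (fun x y => ¬ G.Adj x y)}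

open Finset

theorem card_filter_two_le_card {ι : Type*} [Fintype ι] :
    #{B : Finset ι | 2 ≤ #B} = 2 ^ Fintype.card ι - (Fintype.card ι + 1) := by
  classical
  have hsmall : ({B : Finset ι | ¬ 2 ≤ #B} : Finset (Finset ι)) =
      insert ∅ (univ.map ⟨singleton, singleton_injective⟩) := by
    ext B
    simp [Nat.le_one_iff_eq_zero_or_eq_one, card_eq_one, eq_comm]
  have hsplit := card_filter_add_card_filter_not (s := (univ : Finset (Finset ι))) (2 ≤ #·)
  rw [hsmall, card_insert_of_notMem (by simp), card_map, card_univ, card_univ,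
    Fintype.card_finset] at hsplit
  omega

section AdjacencyByIntersectingLabels

variable {V ι : Type*} {G : SimpleGraph V} {L : V → Finset ι}

theorem injective_of_adj_iff (hL : ∀ x y, G.Adj x y ↔ x ≠ y ∧ ¬ Disjoint (L x) (L y))
    (hne : ∀ v, (L v).Nonempty)
    (heqv : ∀ ⦃x y : V⦄, G.Adj x y → G.neighborSet x ∪ {x} ≠ G.neighborSet y ∪ {y}) :
    Function.Injective L := by
  intro x y hxy
  by_contra hxy'
  have hadj : G.Adj x y := (hL x y).2 ⟨hxy', by simpa [hxy] using (hne y).ne_empty⟩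
  refine heqv hadj (Set.ext fun z => ?_)
  rcases eq_or_ne z x with rfl | hzx
  · simp [hadj.symm]
  rcases eq_or_ne z y with rfl | hzy
  · simp [hadj]
  simp [hL, hzx, hzy, hzx.symm, hzy.symm, hxy]

theorem two_le_card_of_adj_of_card_le
    (hL : ∀ x y, G.Adj x y ↔ x ≠ y ∧ ¬ Disjoint (L x) (L y)) (hinj : Function.Injective L)
    {u v : V} (huv : G.Adj v u) (hcard : #(L v) ≤ #(L u)) : 2 ≤ #(L u) := by
  by_contra! hu
  obtain ⟨hne, hmeet⟩ := (hL v u).1 huv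
  obtain ⟨i, hiv, hiu⟩ := not_disjoint_iff.1 hmeet
  have hsingleton {s : Finset ι} (hs : #s ≤ 1) (hi : i ∈ s) : s = {i} :=
    eq_singleton_iff_unique_mem.2 ⟨hi, fun j hj => card_le_one.1 hs j hj i hi⟩
  exact hne (hinj ((hsingleton (by omega) hiv).trans (hsingleton (by omega) hiu).symm))

variable [Fintype V] [Fintype ι]

theorem indepNum_le_card_of_adj_iff (hL : ∀ x y, G.Adj x y ↔ x ≠ y ∧ ¬ Disjoint (L x) (L y))
    (hne : ∀ v, (L v).Nonempty) : indepNum G ≤ Fintype.card ι := by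
  classical
  refine csSup_le ⟨0, ∅, by simp⟩ ?_
  rintro n ⟨s, rfl, hs⟩
  have hdisj : (s : Set V).PairwiseDisjoint L := fun x hx y hy hxy => by
    by_contra hmeet
    exact hs hx hy hxy ((hL x y).2 ⟨hxy, hmeet⟩)
  exact (card_le_card_biUnion hdisj fun v _ => hne v).trans (card_le_univ _)

theorem degeneracy_le_of_adj_iff (hL : ∀ x y, G.Adj x y ↔ x ≠ y ∧ ¬ Disjoint (L x) (L y))
    (hinj : Function.Injective L) :
    degeneracy G ≤ 2 ^ Fintype.card ι - (Fintype.card ι + 1) := by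
  classical
  refine Nat.sInf_le fun S hS => ?_
  obtain ⟨v, hvS, hvmin⟩ := S.exists_min_image (fun u => #(L u)) hS
  refine ⟨v, hvS, ?_⟩
  rw [← card_filter_two_le_card (ι := ι), ← Set.ncard_coe_finset]
  refine Set.ncard_le_ncard_of_injOn L (fun u ⟨huS, huv⟩ => ?_) hinj.injOn
  simpa using two_le_card_of_adj_of_card_le hL hinj huv (hvmin u huS)

end AdjacencyByIntersectingLabels

section EdgeCliqueCover

variable {V : Type*} [DecidableEq V] {k : ℕ}

def cliquesAt (C : Fin k → Finset V) (v : V) : Finset (Fin k) := {l | v ∈ C l}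

@[simp]
theorem mem_cliquesAt {C : Fin k → Finset V} {v : V} {l : Fin k} :
    l ∈ cliquesAt C v ↔ v ∈ C l := by
  simp [cliquesAt]

variable {G : SimpleGraph V} {C : Fin k → Finset V}

theorem IsEdgeCliqueCover.adj_iff (hC : IsEdgeCliqueCover G C) (x y : V) :
    G.Adj x y ↔ x ≠ y ∧ ¬ Disjoint (cliquesAt C x) (cliquesAt C y) := by
  simp only [not_disjoint_iff, mem_cliquesAt]
  refine ⟨fun h => ⟨h.ne, hC.2 h⟩, fun ⟨hxy, l, hx, hy⟩ => hC.1 l hx hy hxy⟩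

theorem IsEdgeCliqueCover.cliquesAt_nonempty (hC : IsEdgeCliqueCover G C) {v : V}
    (hv : (G.neighborSet v).Nonempty) : (cliquesAt C v).Nonempty := by
  obtain ⟨w, hw⟩ := hv
  obtain ⟨l, hvl, -⟩ := hC.2 hw
  exact ⟨l, mem_cliquesAt.2 hvl⟩

end EdgeCliqueCover

/-- If a finite simple graph `G` with degeneracy `d` and independence number `α` has no
isolated vertices and no pair of adjacent vertices with equal closed neighbourhoods, then
any edge clique cover `(C_1, …, C_k)` of `G` satisfies `d + α < 2 ^ k`. -/
theorem degeneracy_add_indepNum_lt_two_pow {V : Type*} [Fintype V] (G : SimpleGraph V)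
    (hiso : ∀ x : V, (G.neighborSet x).Nonempty)
    (heqv : ∀ ⦃x y : V⦄, G.Adj x y →
      G.neighborSet x ∪ {x} ≠ G.neighborSet y ∪ {y})
    {k : ℕ} (C : Fin k → Finset V) (hC : IsEdgeCliqueCover G C) :
    degeneracy G + indepNum G < 2 ^ k := by
  classical
  have hL := hC.adj_iff
  have hne v := hC.cliquesAt_nonempty (hiso v)
  have hdeg := degeneracy_le_of_adj_iff hL (injective_of_adj_iff hL hne heqv)
  have hα := indepNum_le_card_of_adj_iff hL hne
  rw [Fintype.card_fin] at hdeg hα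
  have hk := Nat.lt_two_pow_self (n := k)
  omega
end

section
/- Let 𝒞 = (C_1, …, C_k) be an edge clique cover of a finite simple graph G = (V,E). If 𝒞 is locally minimal, then for each pair of distinct indices a, b ∈ {1, …, k} there exist vertices x ∈ C_a and y ∈ C_b with x ≠ y and {x,y} ∉ E. -/
/-- One step of the locally minimal construction: processing the edge `{x, y}`.
If the edge is already contained in some clique of the current family, nothing changes;
otherwise, if some clique of the family can absorb the edge (the union is still a clique),
exactly one such clique is replaced by its extension; otherwise the new clique `{x, y}`
is appended. -/
inductive LMStep {V : Type*} [DecidableEq V] (G : SimpleGraph V) :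
    List (Finset V) → V → V → List (Finset V) → Prop
  | covered (cc : List (Finset V)) (x y : V)
      (h : ∃ D ∈ cc, x ∈ D ∧ y ∈ D) :
      LMStep G cc x y cc
  | extend (pre post : List (Finset V)) (D : Finset V) (x y : V)
      (hnc : ∀ D' ∈ pre ++ D :: post, ¬ (x ∈ D' ∧ y ∈ D'))
      (hcl : G.IsClique ((D ∪ {x, y} : Finset V) : Set V)) :
      LMStep G (pre ++ D :: post) x y (pre ++ (D ∪ {x, y}) :: post)
  | newClique (cc : List (Finset V)) (x y : V)
      (hnc : ∀ D ∈ cc, ¬ (x ∈ D ∧ y ∈ D))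
      (hext : ∀ D ∈ cc, ¬ G.IsClique ((D ∪ {x, y} : Finset V) : Set V)) :
      LMStep G cc x y (cc ++ [({x, y} : Finset V)])

/-- `LMRun G cc es cc'` means: starting from the family `cc` and processing the edges in
the list `es` one by one according to the locally minimal construction, one can obtain
the family `cc'`. -/
inductive LMRun {V : Type*} [DecidableEq V] (G : SimpleGraph V) :
    List (Finset V) → List (Sym2 V) → List (Finset V) → Prop
  | nil (cc : List (Finset V)) : LMRun G cc [] cc
  | cons (cc cc' cc'' : List (Finset V)) (x y : V) (es : List (Sym2 V))
      (hstep : LMStep G cc x y cc') (hrest : LMRun G cc' es cc'') :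
      LMRun G cc (s(x, y) :: es) cc''

/-- A family of cliques `(C_1, …, C_k)` is a locally minimal clique cover of `G` if it can
be produced (as an unordered family) by the locally minimal construction, starting from the
empty family and processing the edges of `G` in some enumeration (a duplicate-free list
containing exactly the edges of `G`). -/
def IsLocallyMinimal {V : Type*} [DecidableEq V] (G : SimpleGraph V) {k : ℕ}
    (C : Fin k → Finset V) : Prop :=
  ∃ es : List (Sym2 V), es.Nodup ∧ (∀ e, e ∈ es ↔ e ∈ G.edgeSet) ∧
    ∃ L : List (Finset V), LMRun G [] es L ∧ L.Perm (List.ofFn C)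

/-!
Each step of the construction keeps the following invariant of the current family: no two of
its members have a clique as their union. Adding a new clique `{x, y}` is only allowed when no
member absorbs it, and enlarging a member preserves the invariant since supersets of
non-cliques are non-cliques. Hence in the final cover `C_a ∪ C_b` is not a clique for
`a ≠ b`, and as `C_a` and `C_b` are cliques, the missing edge runs between them.
-/

namespace SimpleGraph

variable {V : Type*} (G : SimpleGraph V)

theorem exists_not_adj_of_not_isClique_union {A B : Set V} (hA : G.IsClique A)
    (hB : G.IsClique B) (h : ¬ G.IsClique (A ∪ B)) :
    ∃ x ∈ A, ∃ y ∈ B, x ≠ y ∧ ¬ G.Adj x y := by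
  by_contra! hAB
  exact h (Set.pairwise_union.2 ⟨hA, hB, fun x hx y hy hxy => ⟨hAB x hx y hy hxy,
    (hAB x hx y hy hxy).symm⟩⟩)

theorem not_isClique_union_mono {A A' B B' : Set V} (hA : A ⊆ A') (hB : B ⊆ B')
    (h : ¬ G.IsClique (A ∪ B)) : ¬ G.IsClique (A' ∪ B') :=
  fun hc => h (hc.subset (Set.union_subset_union hA hB))

def IsMergeFree (cc : List (Finset V)) : Prop :=
  cc.Pairwise fun A B : Finset V => ¬ G.IsClique ((A : Set V) ∪ B)

end SimpleGraph

section LocallyMinimal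

variable {V : Type*} [DecidableEq V] {G : SimpleGraph V}

theorem LMStep.isMergeFree {cc cc' : List (Finset V)} {x y : V}
    (hstep : LMStep G cc x y cc') (hcc : G.IsMergeFree cc) : G.IsMergeFree cc' := by
  cases hstep with
  | covered => exact hcc
  | extend pre post D x y =>
    have hD : (D : Set V) ⊆ ↑(D ∪ {x, y}) := Finset.coe_subset.2 Finset.subset_union_left
    simp only [SimpleGraph.IsMergeFree, List.pairwise_append, List.pairwise_cons,
      List.mem_cons] at hcc ⊢
    obtain ⟨hpre, ⟨hDpost, hpost⟩, hcross⟩ := hcc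
    refine ⟨hpre, ⟨fun B hB => G.not_isClique_union_mono hD subset_rfl (hDpost B hB), hpost⟩,
      ?_⟩
    rintro A hA B (rfl | hB)
    · exact G.not_isClique_union_mono subset_rfl hD (hcross A hA _ (.inl rfl))
    · exact hcross A hA B (.inr hB)
  | newClique cc x y _ hext =>
    simp only [SimpleGraph.IsMergeFree, List.pairwise_append, List.pairwise_singleton,
      List.mem_singleton]
    exact ⟨hcc, trivial, fun A hA B hB => hB ▸ Finset.coe_union A _ ▸ hext A hA⟩

theorem LMRun.isMergeFree {cc cc' : List (Finset V)} {es : List (Sym2 V)}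
    (hrun : LMRun G cc es cc') (hcc : G.IsMergeFree cc) : G.IsMergeFree cc' := by
  induction hrun with
  | nil => exact hcc
  | cons _ _ _ _ _ _ hstep _ ih => exact ih (hstep.isMergeFree hcc)

theorem IsLocallyMinimal.not_isClique_union {k : ℕ} {C : Fin k → Finset V}
    (hlm : IsLocallyMinimal G C) {a b : Fin k} (hab : a ≠ b) :
    ¬ G.IsClique ((C a : Set V) ∪ C b) := by
  obtain ⟨es, -, -, L, hrun, hperm⟩ := hlm
  have hsymm {A B : Finset V} (h : ¬ G.IsClique ((A : Set V) ∪ B)) :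
      ¬ G.IsClique ((B : Set V) ∪ A) := by
    rwa [Set.union_comm]
  have hC := List.pairwise_ofFn.1 (hrun.isMergeFree List.Pairwise.nil |>.perm hperm hsymm)
  rcases hab.lt_or_gt with h | h
  · exact hC h
  · exact hsymm (hC h)

end LocallyMinimal

theorem locallyMinimal_pairwise_nonadjacent_general {V : Type*} [DecidableEq V]
    (G : SimpleGraph V) {k : ℕ} (C : Fin k → Finset V)
    (hcov : IsEdgeCliqueCover G C) (hlm : IsLocallyMinimal G C) :
    ∀ a b : Fin k, a ≠ b → ∃ x ∈ C a, ∃ y ∈ C b, x ≠ y ∧ ¬ G.Adj x y := by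
  intro a b hab
  exact G.exists_not_adj_of_not_isClique_union (hcov.1 a) (hcov.1 b)
    (hlm.not_isClique_union hab)

/-- If an edge clique cover `(C_1, …, C_k)` of a finite simple graph `G` is locally
minimal, then for each pair of distinct indices `a, b` there exist `x ∈ C_a` and
`y ∈ C_b` with `x ≠ y` and `{x, y} ∉ E`. -/
theorem locallyMinimal_pairwise_nonadjacent {V : Type*} [Fintype V] [DecidableEq V]
    (G : SimpleGraph V) {k : ℕ} (C : Fin k → Finset V)
    (hcov : IsEdgeCliqueCover G C) (hlm : IsLocallyMinimal G C) :
    ∀ a b : Fin k, a ≠ b → ∃ x ∈ C a, ∃ y ∈ C b, x ≠ y ∧ ¬ G.Adj x y :=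
  locallyMinimal_pairwise_nonadjacent_general G C hcov hlm
end

section
/- Let 𝒞 = (C_1, …, C_k) be an edge clique cover of a finite simple graph G = (V,E). If 𝒞 is a minimum clique cover of G, i.e., no edge clique cover of G has fewer than k cliques, then there exists a locally minimal clique cover 𝒞* = (C*_1, …, C*_k) of G with the same number k of cliques such that C*_l ⊆ C_l for all l ∈ {1, …, k}. -/
/-!
Feed the construction the edges of `C 0`, then those of `C 1`, and so on, keeping each current
clique tagged by an index `t` with the clique inside `C t`, one clique per tag. An edge of `C l`
is skipped if already covered, and absorbed by the clique tagged `l` if there is one. If there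
is none, some remaining edge of `C l` can be absorbed by no current clique, so the construction
must open a new clique (tagged `l`) for it: otherwise enlarging every current clique `D` by the
vertices of `C l` adjacent to all of `D`, and adding the `C j` with `j > l`, would give an edge
clique cover by fewer than `k` cliques. So the run ends with at most one clique per index, and
minimality of `k` forces exactly one.
-/

namespace SimpleGraph

variable {V : Type*} [DecidableEq V] (G : SimpleGraph V) [DecidableRel G.Adj]

def cliqueExtension (D S : Finset V) : Finset V :=
  D ∪ S.filter fun v => ∀ u ∈ D, u ≠ v → G.Adj u v

variable {G}

theorem isClique_cliqueExtension {D S : Finset V} (hD : G.IsClique (D : Set V))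
    (hS : G.IsClique (S : Set V)) : G.IsClique (G.cliqueExtension D S : Set V) := by
  have : Std.Symm G.Adj := ⟨fun _ _ h => h.symm⟩
  rw [cliqueExtension, Finset.coe_union, isClique_iff, Set.pairwise_union_of_symm]
  refine ⟨hD, hS.subset fun v hv => (Finset.mem_filter.1 hv).1, fun u hu v hv huv => ?_⟩
  exact (Finset.mem_filter.1 hv).2 u hu huv

theorem mem_cliqueExtension_of_isClique_union {D S : Finset V} {x y : V} (hx : x ∈ S)
    (hcl : G.IsClique ((D ∪ {x, y} : Finset V) : Set V)) : x ∈ G.cliqueExtension D S :=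
  Finset.mem_union_right _ <| Finset.mem_filter.2
    ⟨hx, fun u hu hux => hcl (by simp [hu]) (by simp) hux⟩

end SimpleGraph

section ListCover

variable {V : Type*} (G : SimpleGraph V)

def IsEdgeCliqueCoverList (L : List (Finset V)) : Prop :=
  (∀ D ∈ L, G.IsClique (D : Set V)) ∧ ∀ ⦃x y : V⦄, G.Adj x y → ∃ D ∈ L, x ∈ D ∧ y ∈ D

variable {G}

theorem isEdgeCliqueCover_iff_ofFn {k : ℕ} {C : Fin k → Finset V} :
    IsEdgeCliqueCover G C ↔ IsEdgeCliqueCoverList G (List.ofFn C) := by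
  simp [IsEdgeCliqueCover, IsEdgeCliqueCoverList, List.mem_ofFn]

theorem IsEdgeCliqueCoverList.perm {L L' : List (Finset V)} (h : IsEdgeCliqueCoverList G L)
    (hp : L.Perm L') : IsEdgeCliqueCoverList G L' := by
  simpa only [IsEdgeCliqueCoverList, hp.mem_iff] using h

theorem IsEdgeCliqueCoverList.le_length {k : ℕ}
    (hmin : ∀ (k' : ℕ) (C' : Fin k' → Finset V), IsEdgeCliqueCover G C' → k ≤ k')
    {L : List (Finset V)} (h : IsEdgeCliqueCoverList G L) : k ≤ L.length :=
  hmin _ L.get (isEdgeCliqueCover_iff_ofFn.2 (by rwa [List.ofFn_get]))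

end ListCover

theorem List.exists_perm_ofFn_of_nodup_map_fst {α : Type*} {k : ℕ} {L : List (Fin k × α)}
    (hL : (L.map Prod.fst).Nodup) (hlen : L.length = k) :
    ∃ f : Fin k → α, L.Perm (List.ofFn fun j => (j, f j)) := by
  have hfst : ∀ j, ∃ p ∈ L, p.1 = j := by
    have : (L.map Prod.fst).toFinset = Finset.univ :=
      Finset.eq_univ_of_card _ (by simp [List.toFinset_card_of_nodup hL, hlen])
    intro j
    simpa using this.ge (Finset.mem_univ j)
  choose P hPL hPfst using hfst
  have hP : ∀ p ∈ L, P p.1 = p := fun p hp => List.inj_on_of_nodup_map hL (hPL _) hp (hPfst _)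
  refine ⟨fun j => (P j).2, (List.perm_ext_iff_of_nodup (hL.of_map _) ?_).2 fun p => ?_⟩
  · exact List.nodup_ofFn.2 fun i j hij => congrArg Prod.fst hij
  · refine ⟨fun hp => List.mem_ofFn.2 ⟨p.1, ?_⟩, fun hp => ?_⟩
    · show (p.1, (P p.1).2) = p
      rw [hP p hp]
    · obtain ⟨j, rfl⟩ := List.mem_ofFn.1 hp
      have h := hPL j
      rwa [← Prod.mk.eta (p := P j), hPfst] at h

theorem LMRun.append_step {V : Type*} [DecidableEq V] {G : SimpleGraph V}
    {cc₀ cc₁ cc₂ : List (Finset V)} {es : List (Sym2 V)} {x y : V} (h : LMRun G cc₀ es cc₁)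
    (hstep : LMStep G cc₁ x y cc₂) : LMRun G cc₀ (es ++ [s(x, y)]) cc₂ := by
  induction h with
  | nil => exact .cons _ _ _ _ _ _ hstep (.nil _)
  | cons _ _ _ _ _ _ hstep' _ ih => exact .cons _ _ _ _ _ _ hstep' (ih hstep)


theorem exists_unabsorbable_edge {V : Type*} [DecidableEq V] {G : SimpleGraph V} {k : ℕ}
    {C : Fin k → Finset V} (hcov : IsEdgeCliqueCover G C)
    (hmin : ∀ (k' : ℕ) (C' : Fin k' → Finset V), IsEdgeCliqueCover G C' → k ≤ k')
    {cc : List (Fin k × Finset V)} (hsub : ∀ p ∈ cc, p.2 ⊆ C p.1)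
    (htags : (cc.map Prod.fst).Nodup) {l : Fin k} (hlt : ∀ t ∈ cc.map Prod.fst, t < l)
    (hbelow : ∀ j < l, ∀ e ∈ G.edgeSet, e ∈ (C j).sym2 → ∃ p ∈ cc, e ∈ p.2.sym2) :
    ∃ x y, G.Adj x y ∧ s(x, y) ∈ (C l).sym2 ∧
      ∀ D ∈ cc.map Prod.snd, ¬ G.IsClique ((D ∪ {x, y} : Finset V) : Set V) := by
  classical
  by_contra! habs
  set L := cc.map (fun p => G.cliqueExtension p.2 (C l)) ++
    List.ofFn fun i : Fin (k - (l + 1)) => C ⟨l + 1 + i, by omega⟩ with hL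
  have hcover : IsEdgeCliqueCoverList G L := by
    refine ⟨fun D hD => ?_, fun x y hxy => ?_⟩
    · rcases List.mem_append.1 hD with hD | hD
      · obtain ⟨p, hp, rfl⟩ := List.mem_map.1 hD
        exact SimpleGraph.isClique_cliqueExtension
          ((hcov.1 p.1).subset (Finset.coe_subset.2 (hsub p hp))) (hcov.1 l)
      · obtain ⟨i, rfl⟩ := List.mem_ofFn.1 hD
        exact hcov.1 _
    obtain ⟨j, hx, hy⟩ := hcov.2 hxy
    rcases lt_trichotomy j l with hj | rfl | hj
    · obtain ⟨p, hp, hxyp⟩ := hbelow j hj _ hxy (Finset.mk_mem_sym2_iff.2 ⟨hx, hy⟩)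
      rw [Finset.mk_mem_sym2_iff] at hxyp
      exact ⟨_, List.mem_append_left _ (List.mem_map_of_mem hp),
        Finset.mem_union_left _ hxyp.1, Finset.mem_union_left _ hxyp.2⟩
    · obtain ⟨D, hD, hcl⟩ := habs x y hxy (Finset.mk_mem_sym2_iff.2 ⟨hx, hy⟩)
      obtain ⟨p, hp, rfl⟩ := List.mem_map.1 hD
      exact ⟨_, List.mem_append_left _ (List.mem_map_of_mem hp),
        SimpleGraph.mem_cliqueExtension_of_isClique_union hx hcl,
        SimpleGraph.mem_cliqueExtension_of_isClique_union hy (Finset.pair_comm x y ▸ hcl)⟩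
    · refine ⟨C j, List.mem_append_right _ (List.mem_ofFn.2 ⟨⟨j - (l + 1), by omega⟩, ?_⟩), hx, hy⟩
      congr 1
      ext
      simp only
      omega
  have hlen : cc.length ≤ l := by
    have := Finset.card_le_card (s := (cc.map Prod.fst).toFinset) (t := Finset.Iio l)
      fun t ht => Finset.mem_Iio.2 (hlt t (List.mem_toFinset.1 ht))
    rwa [List.toFinset_card_of_nodup htags, List.length_map, Fin.card_Iio] at this
  have := hcover.le_length hmin
  simp only [hL, List.length_append, List.length_map, List.length_ofFn] at this
  omega

section

variable {V : Type*} [DecidableEq V] {G : SimpleGraph V} {k : ℕ} {C : Fin k → Finset V}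

variable (G C) in
/-- A run of the construction on the edges `es`, whose cliques are tagged by distinct indices
of `C`: the clique tagged `t` lies in `C t`, and when it was opened all edges inside the `C j`,
`j < t`, had already been processed. -/
structure TaggedRun (es : List (Sym2 V)) (cc : List (Fin k × Finset V)) : Prop where
  nodup : es.Nodup
  subset_edgeSet : ∀ e ∈ es, e ∈ G.edgeSet
  run : LMRun G [] es (cc.map Prod.snd)
  nodup_tags : (cc.map Prod.fst).Nodup
  subset_tag : ∀ p ∈ cc, p.2 ⊆ C p.1
  covered : ∀ e ∈ es, ∃ p ∈ cc, e ∈ p.2.sym2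
  processed_below : ∀ t ∈ cc.map Prod.fst, ∀ j < t, ∀ e ∈ G.edgeSet, e ∈ (C j).sym2 → e ∈ es

namespace TaggedRun

variable {es : List (Sym2 V)} {cc cc' : List (Fin k × Finset V)} {x y : V}

variable (G C) in
theorem nil : TaggedRun G C [] [] :=
  ⟨List.nodup_nil, by simp, .nil _, List.nodup_nil, by simp, by simp, by simp⟩

theorem snoc (h : TaggedRun G C es cc) (hxy : G.Adj x y) (hnew : s(x, y) ∉ es)
    (hstep : LMStep G (cc.map Prod.snd) x y (cc'.map Prod.snd))
    (htags : (cc'.map Prod.fst).Nodup) (hsub : ∀ p ∈ cc', p.2 ⊆ C p.1)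
    (hmono : ∀ p ∈ cc, ∃ q ∈ cc', p.2 ⊆ q.2) (hmem : ∃ q ∈ cc', s(x, y) ∈ q.2.sym2)
    (hbelow : ∀ t ∈ cc'.map Prod.fst, ∀ j < t, ∀ e ∈ G.edgeSet, e ∈ (C j).sym2 → e ∈ es) :
    TaggedRun G C (es ++ [s(x, y)]) cc' where
  nodup := h.nodup.append (List.nodup_singleton _) (by simpa using hnew)
  subset_edgeSet e he := by
    rcases List.mem_append.1 he with he | he
    · exact h.subset_edgeSet e he
    · rwa [List.mem_singleton.1 he]
  run := h.run.append_step hstep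
  nodup_tags := htags
  subset_tag := hsub
  covered e he := by
    rcases List.mem_append.1 he with he | he
    · obtain ⟨p, hp, hep⟩ := h.covered e he
      obtain ⟨q, hq, hpq⟩ := hmono p hp
      exact ⟨q, hq, Finset.sym2_mono hpq hep⟩
    · rwa [List.mem_singleton.1 he]
  processed_below t ht j hj e he hej := List.mem_append_left _ (hbelow t ht j hj e he hej)

theorem snoc_covered (h : TaggedRun G C es cc) (hxy : G.Adj x y) (hnew : s(x, y) ∉ es)
    (hcov : ∃ p ∈ cc, s(x, y) ∈ p.2.sym2) : TaggedRun G C (es ++ [s(x, y)]) cc := by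
  obtain ⟨p, hp, hpxy⟩ := hcov
  refine h.snoc hxy hnew (.covered _ x y ?_) h.nodup_tags h.subset_tag
    (fun p hp => ⟨p, hp, subset_rfl⟩) ⟨p, hp, hpxy⟩ h.processed_below
  exact ⟨p.2, List.mem_map_of_mem hp, Finset.mk_mem_sym2_iff.1 hpxy⟩

theorem snoc_extend {cc₁ cc₂ : List (Fin k × Finset V)} {p : Fin k × Finset V}
    (h : TaggedRun G C es (cc₁ ++ p :: cc₂)) (hxy : G.Adj x y) (hnew : s(x, y) ∉ es)
    (hunc : ∀ q ∈ cc₁ ++ p :: cc₂, s(x, y) ∉ q.2.sym2) (hxyC : s(x, y) ∈ (C p.1).sym2)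
    (hC : G.IsClique (C p.1 : Set V)) :
    TaggedRun G C (es ++ [s(x, y)]) (cc₁ ++ (p.1, p.2 ∪ {x, y}) :: cc₂) := by
  have hsubC : p.2 ∪ {x, y} ⊆ C p.1 :=
    Finset.union_subset (h.subset_tag p (by simp)) (by simpa [Finset.insert_subset_iff] using hxyC)
  have hfst : (cc₁ ++ (p.1, p.2 ∪ {x, y}) :: cc₂).map Prod.fst =
      (cc₁ ++ p :: cc₂).map Prod.fst := by
    simp
  refine h.snoc hxy hnew ?_ (hfst ▸ h.nodup_tags) ?_ ?_ ⟨(p.1, p.2 ∪ {x, y}), by simp, by simp⟩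
    (hfst ▸ h.processed_below)
  · simp only [List.map_append, List.map_cons]
    refine .extend _ _ _ x y (fun D hD hxyD => ?_) (hC.subset (Finset.coe_subset.2 hsubC))
    rw [← List.map_cons, ← List.map_append] at hD
    obtain ⟨q, hq, rfl⟩ := List.mem_map.1 hD
    exact hunc q hq (Finset.mk_mem_sym2_iff.2 hxyD)
  · intro q hq
    simp only [List.mem_append, List.mem_cons] at hq
    rcases hq with hq | rfl | hq
    · exact h.subset_tag q (by simp [hq])
    · exact hsubC
    · exact h.subset_tag q (by simp [hq])
  · intro q hq
    simp only [List.mem_append, List.mem_cons] at hq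
    rcases hq with hq | rfl | hq
    · exact ⟨q, by simp [hq], subset_rfl⟩
    · exact ⟨(q.1, q.2 ∪ {x, y}), by simp, Finset.subset_union_left⟩
    · exact ⟨q, by simp [hq], subset_rfl⟩

theorem snoc_newClique (h : TaggedRun G C es cc) (hxy : G.Adj x y) (hnew : s(x, y) ∉ es)
    (hunc : ∀ p ∈ cc, s(x, y) ∉ p.2.sym2)
    (hext : ∀ D ∈ cc.map Prod.snd, ¬ G.IsClique ((D ∪ {x, y} : Finset V) : Set V))
    {l : Fin k} (hl : l ∉ cc.map Prod.fst) (hxyC : s(x, y) ∈ (C l).sym2)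
    (hbelow : ∀ j < l, ∀ e ∈ G.edgeSet, e ∈ (C j).sym2 → e ∈ es) :
    TaggedRun G C (es ++ [s(x, y)]) (cc ++ [(l, {x, y})]) := by
  refine h.snoc hxy hnew ?_ ?_ ?_ (fun p hp => ⟨p, by simp [hp], subset_rfl⟩)
    ⟨(l, {x, y}), by simp, by simp⟩ ?_
  · rw [List.map_append]
    refine .newClique _ x y (fun D hD hxyD => ?_) hext
    obtain ⟨p, hp, rfl⟩ := List.mem_map.1 hD
    exact hunc p hp (Finset.mk_mem_sym2_iff.2 hxyD)
  · rw [List.map_append, List.nodup_append]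
    exact ⟨h.nodup_tags, List.nodup_singleton _, fun t ht l' hl' => by
      rw [List.map_singleton, List.mem_singleton] at hl'
      rw [hl']
      exact ne_of_mem_of_not_mem ht hl⟩
  · intro p hp
    rcases List.mem_append.1 hp with hp | hp
    · exact h.subset_tag p hp
    · rw [List.mem_singleton.1 hp]
      simpa [Finset.insert_subset_iff] using hxyC
  · intro t ht
    rw [List.map_append] at ht
    rcases List.mem_append.1 ht with ht | ht
    · exact h.processed_below t ht
    · rw [List.map_singleton, List.mem_singleton] at ht
      rwa [ht]

theorem not_mem_of_forall_not_isClique_union (h : TaggedRun G C es cc)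
    (hC : ∀ j, G.IsClique (C j : Set V))
    (hext : ∀ D ∈ cc.map Prod.snd, ¬ G.IsClique ((D ∪ {x, y} : Finset V) : Set V)) :
    s(x, y) ∉ es := fun hmem => by
  obtain ⟨p, hp, hxyp⟩ := h.covered _ hmem
  refine hext p.2 (List.mem_map_of_mem hp) ?_
  rw [Finset.union_eq_left.2 (by simpa [Finset.insert_subset_iff] using hxyp)]
  exact (hC p.1).subset (Finset.coe_subset.2 (h.subset_tag p hp))

theorem length_le (h : TaggedRun G C es cc) : cc.length ≤ k := by
  simpa using h.nodup_tags.length_le_card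

theorem length_le_ncard [Finite V] (h : TaggedRun G C es cc) : es.length ≤ G.edgeSet.ncard := by
  rw [← List.toFinset_card_of_nodup h.nodup, ← Set.ncard_coe_finset]
  exact Set.ncard_le_ncard fun e he => h.subset_edgeSet e (List.mem_toFinset.1 he)

theorem isEdgeCliqueCoverList (h : TaggedRun G C es cc) (hC : ∀ j, G.IsClique (C j : Set V))
    (hall : ∀ e ∈ G.edgeSet, e ∈ es) : IsEdgeCliqueCoverList G (cc.map Prod.snd) := by
  refine ⟨fun D hD => ?_, fun u v huv => ?_⟩
  · obtain ⟨p, hp, rfl⟩ := List.mem_map.1 hD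
    exact (hC p.1).subset (Finset.coe_subset.2 (h.subset_tag p hp))
  · obtain ⟨p, hp, huvp⟩ := h.covered _ (hall _ ((G.mem_edgeSet).2 huv))
    exact ⟨p.2, List.mem_map_of_mem hp, Finset.mk_mem_sym2_iff.1 huvp⟩

theorem exists_snoc (hcov : IsEdgeCliqueCover G C)
    (hmin : ∀ (k' : ℕ) (C' : Fin k' → Finset V), IsEdgeCliqueCover G C' → k ≤ k')
    (h : TaggedRun G C es cc) (hrem : ∃ e ∈ G.edgeSet, e ∉ es) :
    ∃ e cc', TaggedRun G C (es ++ [e]) cc' := by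
  by_cases hc : ∃ x y, G.Adj x y ∧ s(x, y) ∉ es ∧ ∃ p ∈ cc, s(x, y) ∈ p.2.sym2
  · obtain ⟨x, y, hxy, hnew, hcovd⟩ := hc
    exact ⟨_, _, h.snoc_covered hxy hnew hcovd⟩
  push Not at hc
  obtain ⟨l, ⟨x, y, hxy, hxyl, hnew⟩, hl⟩ := wellFounded_lt.has_min
      {l : Fin k | ∃ x y, G.Adj x y ∧ s(x, y) ∈ (C l).sym2 ∧ s(x, y) ∉ es} <| by
    obtain ⟨e, he, hnew⟩ := hrem
    induction e using Sym2.ind with | _ x y => ?_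
    obtain ⟨j, hx, hy⟩ := hcov.2 he
    exact ⟨j, x, y, he, Finset.mk_mem_sym2_iff.2 ⟨hx, hy⟩, hnew⟩
  have hdone : ∀ j < l, ∀ e ∈ G.edgeSet, e ∈ (C j).sym2 → e ∈ es := by
    intro j hj e he hej
    induction e using Sym2.ind with | _ u v => ?_
    by_contra hnew'
    exact hl j ⟨u, v, he, hej, hnew'⟩ hj
  by_cases hlt : l ∈ cc.map Prod.fst
  · obtain ⟨p, hp, rfl⟩ := List.mem_map.1 hlt
    obtain ⟨cc₁, cc₂, rfl⟩ := List.append_of_mem hp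
    exact ⟨_, _, h.snoc_extend hxy hnew (hc x y hxy hnew) hxyl (hcov.1 _)⟩
  have htag : ∀ t ∈ cc.map Prod.fst, t < l := fun t ht =>
    lt_of_le_of_ne (not_lt.1 fun hlt' => hnew (h.processed_below t ht l hlt' _ hxy hxyl))
      (ne_of_mem_of_not_mem ht hlt)
  obtain ⟨u, v, huv, huvl, hext⟩ := exists_unabsorbable_edge hcov hmin h.subset_tag
    h.nodup_tags htag fun j hj e he hej => h.covered e (hdone j hj e he hej)
  have hnew' := h.not_mem_of_forall_not_isClique_union hcov.1 hext
  exact ⟨_, _, h.snoc_newClique huv hnew' (hc u v huv hnew') hext hlt huvl hdone⟩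

theorem exists_complete [Finite V] (hcov : IsEdgeCliqueCover G C)
    (hmin : ∀ (k' : ℕ) (C' : Fin k' → Finset V), IsEdgeCliqueCover G C' → k ≤ k')
    {es : List (Sym2 V)} {cc : List (Fin k × Finset V)} (h : TaggedRun G C es cc) :
    ∃ es' cc', TaggedRun G C es' cc' ∧ ∀ e ∈ G.edgeSet, e ∈ es' := by
  by_cases hall : ∀ e ∈ G.edgeSet, e ∈ es
  · exact ⟨es, cc, h, hall⟩
  push Not at hall
  obtain ⟨e, cc', h'⟩ := h.exists_snoc hcov hmin hall
  have := h'.length_le_ncard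
  exact h'.exists_complete hcov hmin
termination_by G.edgeSet.ncard - es.length
decreasing_by
  simp only [List.length_append, List.length_singleton] at this ⊢
  omega

end TaggedRun

end

/-- If `(C_1, …, C_k)` is a minimum clique cover of a finite simple graph `G` (no edge
clique cover of `G` has fewer than `k` cliques), then there is a locally minimal clique
cover `(C*_1, …, C*_k)` of `G` with the same number of cliques such that `C*_l ⊆ C_l`
for all `l`. -/
theorem exists_locallyMinimal_subcover_of_minimum {V : Type*} [Fintype V] [DecidableEq V]
    (G : SimpleGraph V) {k : ℕ} (C : Fin k → Finset V) (hcov : IsEdgeCliqueCover G C)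
    (hmin : ∀ (k' : ℕ) (C' : Fin k' → Finset V), IsEdgeCliqueCover G C' → k ≤ k') :
    ∃ Cs : Fin k → Finset V, IsEdgeCliqueCover G Cs ∧ IsLocallyMinimal G Cs ∧
      ∀ l : Fin k, Cs l ⊆ C l := by
  obtain ⟨es, cc, h, hall⟩ := (TaggedRun.nil G C).exists_complete hcov hmin
  have hcover := h.isEdgeCliqueCoverList hcov.1 hall
  have hlen : cc.length = k := le_antisymm h.length_le (by simpa using hcover.le_length hmin)
  obtain ⟨f, hf⟩ := List.exists_perm_ofFn_of_nodup_map_fst h.nodup_tags hlen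
  have hperm : (cc.map Prod.snd).Perm (List.ofFn f) := by
    simpa [List.map_ofFn, Function.comp_def] using hf.map Prod.snd
  refine ⟨f, isEdgeCliqueCover_iff_ofFn.2 (hcover.perm hperm),
    ⟨es, h.nodup, fun e => ⟨h.subset_edgeSet e, hall e⟩, _, h.run, hperm⟩, fun j => ?_⟩
  exact h.subset_tag (j, f j) (hf.mem_iff.2 (List.mem_ofFn.2 ⟨j, rfl⟩))
end

section
/- Let 𝒞 = (C_1, …, C_k) be an edge clique cover of a finite simple graph G = (V,E). If 𝒞 is locally minimal, then for each pair of distinct indices i, j ∈ {1, …, k}, C_i is not a subset of C_j. -/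
section Aux

variable {V : Type*} [DecidableEq V] (G : SimpleGraph V)

/-- The key symmetric invariant between two cliques of the family: one of them
contains two vertices whose addition to the other fails to be a clique. -/
def Bad (A B : Finset V) : Prop :=
  (∃ x ∈ A, ∃ y ∈ A, ¬ G.IsClique ((B ∪ {x, y} : Finset V) : Set V)) ∨
  (∃ x ∈ B, ∃ y ∈ B, ¬ G.IsClique ((A ∪ {x, y} : Finset V) : Set V))

variable {G}

lemma not_clique_mono {s t : Finset V} (h : s ⊆ t)
    (hc : ¬ G.IsClique (s : Set V)) : ¬ G.IsClique (t : Set V) :=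
  fun ht => hc (ht.subset (by exact_mod_cast h))

lemma bad_symm {A B : Finset V} (h : Bad G A B) : Bad G B A := h.symm

lemma bad_mono {A B A' B' : Finset V} (h : Bad G A B) (hA : A ⊆ A') (hB : B ⊆ B') :
    Bad G A' B' := by
  rcases h with ⟨x, hx, y, hy, hnc⟩ | ⟨x, hx, y, hy, hnc⟩
  · exact Or.inl ⟨x, hA hx, y, hA hy,
      not_clique_mono (Finset.union_subset_union_left hB) hnc⟩
  · exact Or.inr ⟨x, hB hx, y, hB hy,
      not_clique_mono (Finset.union_subset_union_left hA) hnc⟩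

lemma step_pairwise {cc cc' : List (Finset V)} {x y : V}
    (hs : LMStep G cc x y cc') (hp : cc.Pairwise (Bad G)) : cc'.Pairwise (Bad G) := by
  cases hs with
  | covered cc x y h => exact hp
  | extend pre post D x y hnc hcl =>
      simp only [List.pairwise_append, List.pairwise_cons, List.mem_cons] at hp ⊢
      obtain ⟨h1, ⟨h2, h3⟩, h4⟩ := hp
      refine ⟨h1, ⟨fun b hb => bad_mono (h2 b hb) Finset.subset_union_left le_rfl, h3⟩,
        fun a ha b hb => ?_⟩
      rcases hb with rfl | hb
      · exact bad_mono (h4 a ha D (Or.inl rfl)) le_rfl Finset.subset_union_left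
      · exact h4 a ha b (Or.inr hb)
  | newClique cc x y hnc hext =>
      rw [List.pairwise_append]
      refine ⟨hp, List.pairwise_singleton _ _, fun a ha b hb => ?_⟩
      rw [List.mem_singleton] at hb
      subst hb
      exact Or.inr ⟨x, by simp, y, by simp, hext a ha⟩

lemma run_pairwise {cc cc' : List (Finset V)} {es : List (Sym2 V)}
    (hr : LMRun G cc es cc') (hp : cc.Pairwise (Bad G)) : cc'.Pairwise (Bad G) := by
  induction hr with
  | nil cc => exact hp
  | cons cc cc' cc'' x y es hstep hrest ih => exact ih (step_pairwise hstep hp)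

end Aux

/-- If an edge clique cover `(C_1, …, C_k)` of a finite simple graph `G` is locally
minimal, then for each pair of distinct indices `i, j`, `C_i` is not a subset of `C_j`. -/
theorem locallyMinimal_not_subset {V : Type*} [Fintype V] [DecidableEq V]
    (G : SimpleGraph V) {k : ℕ} (C : Fin k → Finset V)
    (hcov : IsEdgeCliqueCover G C) (hlm : IsLocallyMinimal G C) :
    ∀ i j : Fin k, i ≠ j → ¬ C i ⊆ C j := by
  obtain ⟨es, hnd, hes, L, hrun, hperm⟩ := hlm
  have hP : L.Pairwise (Bad G) := run_pairwise hrun List.Pairwise.nil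
  have hP' : (List.ofFn C).Pairwise (Bad G) :=
    (hperm.pairwise_iff fun h => bad_symm h).mp hP
  rw [List.pairwise_ofFn] at hP'
  have key : ∀ i j : Fin k, i ≠ j → Bad G (C i) (C j) := by
    intro i j hne
    rcases lt_or_gt_of_ne hne with h | h
    · exact hP' h
    · exact bad_symm (hP' h)
  intro i j hne hsub
  rcases key i j hne with ⟨x, hx, y, hy, hnc⟩ | ⟨x, hx, y, hy, hnc⟩
  · refine hnc ((hcov.1 j).subset ?_)
    have : (C j ∪ {x, y} : Finset V) ⊆ C j :=
      Finset.union_subset le_rfl (by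
        intro z hz
        rcases Finset.mem_insert.mp hz with rfl | hz
        · exact hsub hx
        · rw [Finset.mem_singleton] at hz; subst hz; exact hsub hy)
    exact_mod_cast this
  · refine hnc ((hcov.1 j).subset ?_)
    have : (C i ∪ {x, y} : Finset V) ⊆ C j :=
      Finset.union_subset hsub (by
        intro z hz
        rcases Finset.mem_insert.mp hz with rfl | hz
        · exact hx
        · rw [Finset.mem_singleton] at hz; subst hz; exact hy)
    exact_mod_cast this
end

section
/- Let 𝒞 = (C_1, …, C_k) be an edge clique cover of a finite simple graph G = (V,E). If 𝒞 is locally minimal, then every vertex x ∈ V appears in at most |N(x)| distinct cliques of 𝒞, i.e., |{ l ∈ {1,…,k} : x ∈ C_l }| ≤ |N(x)|. -/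

lemma lmstep_count {V : Type*} [DecidableEq V] {G : SimpleGraph V}
    {cc cc' : List (Finset V)} {x y : V} (h : LMStep G cc x y cc') (v : V) :
    cc'.countP (fun D => decide (v ∈ D)) ≤
      cc.countP (fun D => decide (v ∈ D)) + (if v = x ∨ v = y then 1 else 0) := by
  cases h with
  | covered cc x y h => exact Nat.le_add_right _ _
  | extend pre post D x y hnc hcl =>
      simp only [List.countP_append, List.countP_cons]
      have : v ∈ D ∪ {x, y} ↔ v ∈ D ∨ (v = x ∨ v = y) := by
        simp only [Finset.mem_union, Finset.mem_insert, Finset.mem_singleton]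
      by_cases hD : v ∈ D <;> by_cases hxy : v = x ∨ v = y <;>
        simp [hD, hxy, this] <;> try omega
  | newClique cc x y hnc hext =>
      simp only [List.countP_append, List.countP_cons, List.countP_nil]
      have : v ∈ ({x, y} : Finset V) ↔ v = x ∨ v = y := by simp
      by_cases hxy : v = x ∨ v = y <;> simp [hxy, this]

lemma lmrun_count {V : Type*} [DecidableEq V] {G : SimpleGraph V}
    {cc cc' : List (Finset V)} {es : List (Sym2 V)} (h : LMRun G cc es cc') (v : V) :
    cc'.countP (fun D => decide (v ∈ D)) ≤
      cc.countP (fun D => decide (v ∈ D)) + es.countP (fun e => decide (v ∈ e)) := by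
  induction h with
  | nil cc => simp
  | cons cc cc' cc'' x y es hstep hrest ih =>
      have h1 := lmstep_count hstep v
      have h2 : (decide (v ∈ s(x, y)) : Bool) = decide (v = x ∨ v = y) := by
        simp [Sym2.mem_iff]
      rw [List.countP_cons]
      rw [h2]
      by_cases hxy : v = x ∨ v = y <;> simp [hxy] at h1 ⊢ <;> omega

/-- If an edge clique cover `(C_1, …, C_k)` of a finite simple graph `G` is locally
minimal, then every vertex `x` appears in at most `|N(x)|` distinct cliques of the
cover. -/
theorem locallyMinimal_vertex_appearances {V : Type*} [Fintype V] [DecidableEq V]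
    (G : SimpleGraph V) [DecidableRel G.Adj] {k : ℕ} (C : Fin k → Finset V)
    (hcov : IsEdgeCliqueCover G C) (hlm : IsLocallyMinimal G C) :
    ∀ x : V, {l : Fin k | x ∈ C l}.ncard ≤ G.degree x := by
  obtain ⟨es, hnd, hiff, L, hrun, hperm⟩ := hlm
  intro x
  -- LHS
  have hset : {l : Fin k | x ∈ C l} = ↑(Finset.univ.filter (fun l => x ∈ C l)) := by
    ext l; simp
  rw [hset, Set.ncard_coe_finset]
  have hofn : (List.ofFn C).countP (fun D => decide (x ∈ D)) =
      (Finset.univ.filter (fun l => x ∈ C l)).card := by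
    rw [List.ofFn_eq_map, List.countP_map]
    rw [List.countP_eq_length_filter]
    rw [← List.toFinset_card_of_nodup ((List.nodup_finRange k).filter _)]
    congr 1
    ext l
    simp [List.mem_filter, Function.comp]
  have h1 := lmrun_count hrun x
  rw [hperm.countP_eq] at h1
  simp only [List.countP_nil, Nat.zero_add] at h1
  rw [hofn] at h1
  refine h1.trans ?_
  -- RHS
  have hes : es.countP (fun e => decide (x ∈ e)) = G.degree x := by
    rw [List.countP_eq_length_filter]
    rw [← List.toFinset_card_of_nodup (hnd.filter _)]
    rw [← SimpleGraph.card_incidenceFinset_eq_degree]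
    congr 1
    ext e
    simp only [List.toFinset_filter, List.mem_toFinset, Finset.mem_filter,
      SimpleGraph.mem_incidenceFinset, SimpleGraph.incidenceSet, Set.mem_setOf_eq,
      List.mem_filter, decide_eq_true_eq]
    constructor
    · rintro ⟨he, hx⟩; exact ⟨(hiff e).1 he, hx⟩
    · rintro ⟨he, hx⟩; exact ⟨(hiff e).2 he, hx⟩
  omega
end

section
/- Let 𝒞 = (C_1, …, C_k) be an edge clique cover of a finite simple graph G = (V,E) with m edges and maximum degree Δ. If 𝒞 is locally minimal, then the number of individual assignments of edges to cliques of 𝒞 is at most mΔ, i.e., Σ_{{x,y} ∈ E} |{ l ∈ {1,…,k} : {x,y} ⊆ C_l }| ≤ mΔ. -/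
/-! Each step of the locally minimal construction adds at most two vertex slots to the family,
so the cliques of a locally minimal cover have total size at most `2m`. A clique `D` contains
at most `|D| Δ / 2` edges, by double counting incident pairs `(v, e)` with `v ∈ D`. Summing over
the cliques, the number of edge-to-clique assignments is at most `(2m) Δ / 2 = mΔ`. -/

open Finset

namespace SimpleGraph

variable {V : Type*}

theorem card_edgeFinset_filter_mul_two_le [Fintype V] [DecidableEq V] (G : SimpleGraph V)
    [DecidableRel G.Adj] (D : Finset V) :
    #{e ∈ G.edgeFinset | ∀ v ∈ e, v ∈ D} * 2 ≤ #D * G.maxDegree := by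
  refine card_mul_le_card_mul (fun e v ↦ v ∈ e) (fun e he ↦ ?_) (fun v _ ↦ ?_)
  · rw [mem_filter] at he
    calc 2 = #e.toFinset := (G.card_toFinset_mem_edgeFinset ⟨e, he.1⟩).symm
      _ ≤ _ := card_le_card fun v hv ↦ by
        rw [Sym2.mem_toFinset] at hv
        exact (mem_bipartiteAbove _).2 ⟨he.2 v hv, hv⟩
  · calc _ ≤ #(G.incidenceFinset v) := card_le_card fun e he ↦ by
          rw [mem_bipartiteBelow, mem_filter, mem_edgeFinset] at he
          exact (G.mem_incidenceFinset v e).2 ⟨he.1.1, he.2⟩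
      _ = G.degree v := G.card_incidenceFinset_eq_degree v
      _ ≤ G.maxDegree := G.degree_le_maxDegree v

end SimpleGraph

section LocallyMinimal

variable {V : Type*} [DecidableEq V] {G : SimpleGraph V}

theorem LMStep.sum_card_le {cc cc' : List (Finset V)} {x y : V} (h : LMStep G cc x y cc') :
    (cc'.map card).sum ≤ (cc.map card).sum + 2 := by
  have hxy : #({x, y} : Finset V) ≤ 2 := card_le_two
  cases h with
  | covered => omega
  | extend pre post D _ _ _ _ =>
    have := card_union_le D {x, y}
    simp only [List.map_append, List.map_cons, List.sum_append, List.sum_cons]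
    omega
  | newClique =>
    simp only [List.map_append, List.map_cons, List.map_nil, List.sum_append, List.sum_cons,
      List.sum_nil]
    omega

theorem LMRun.sum_card_le {cc cc' : List (Finset V)} {es : List (Sym2 V)}
    (h : LMRun G cc es cc') : (cc'.map card).sum ≤ (cc.map card).sum + 2 * es.length := by
  induction h with
  | nil => simp
  | cons _ _ _ _ _ _ hstep _ _ =>
    have := hstep.sum_card_le
    rw [List.length_cons]
    omega

theorem IsLocallyMinimal.sum_card_le [Fintype V] [DecidableRel G.Adj] {k : ℕ}
    {C : Fin k → Finset V} (h : IsLocallyMinimal G C) :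
    ∑ l, #(C l) ≤ 2 * #G.edgeFinset := by
  obtain ⟨es, hnd, hmem, L, hrun, hperm⟩ := h
  have hlen : es.length = #G.edgeFinset := by
    rw [← List.toFinset_card_of_nodup hnd]
    congr
    ext e
    simp [hmem e]
  have hsum : (L.map card).sum = ∑ l, #(C l) := by
    rw [(hperm.map card).sum_eq, List.map_ofFn, List.sum_ofFn]
    rfl
  simpa [hsum, hlen] using hrun.sum_card_le

end LocallyMinimal

theorem Finset.sum_ncard_setOf_eq_sum_card_filter {α ι : Type*} [Fintype ι] (s : Finset α)
    (p : α → ι → Prop) [∀ a i, Decidable (p a i)] :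
    ∑ a ∈ s, {i | p a i}.ncard = ∑ i, #{a ∈ s | p a i} := by
  simp only [Set.ncard_eq_toFinset_card', Set.toFinset_ofPred, card_filter]
  exact sum_comm

theorem locallyMinimal_edge_assignments_le_general {V : Type*} [Fintype V] [DecidableEq V]
    (G : SimpleGraph V) [DecidableRel G.Adj] {k : ℕ} (C : Fin k → Finset V)
    (hlm : IsLocallyMinimal G C) :
    ∑ e ∈ G.edgeFinset, {l : Fin k | ∀ v ∈ e, v ∈ C l}.ncard ≤
      G.edgeFinset.card * G.maxDegree := by
  rw [sum_ncard_setOf_eq_sum_card_filter _ fun e l ↦ ∀ v ∈ e, v ∈ C l]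
  have key : (∑ l, #{e ∈ G.edgeFinset | ∀ v ∈ e, v ∈ C l}) * 2 ≤
      #G.edgeFinset * G.maxDegree * 2 :=
    calc _ = ∑ l, #{e ∈ G.edgeFinset | ∀ v ∈ e, v ∈ C l} * 2 := sum_mul ..
      _ ≤ ∑ l, #(C l) * G.maxDegree :=
        sum_le_sum fun l _ ↦ G.card_edgeFinset_filter_mul_two_le (C l)
      _ = (∑ l, #(C l)) * G.maxDegree := (sum_mul ..).symm
      _ ≤ 2 * #G.edgeFinset * G.maxDegree := Nat.mul_le_mul_right _ hlm.sum_card_le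
      _ = #G.edgeFinset * G.maxDegree * 2 := by ring
  exact Nat.le_of_mul_le_mul_right key two_pos

/-- If an edge clique cover `(C_1, …, C_k)` of a finite simple graph `G` with `m` edges
and maximum degree `Δ` is locally minimal, then the number of individual assignments of
edges to cliques is at most `mΔ`, i.e.
`Σ_{e ∈ E} |{ l : both endpoints of e lie in C_l }| ≤ mΔ`. -/
theorem locallyMinimal_edge_assignments_le {V : Type*} [Fintype V] [DecidableEq V]
    (G : SimpleGraph V) [DecidableRel G.Adj] {k : ℕ} (C : Fin k → Finset V)
    (hcov : IsEdgeCliqueCover G C) (hlm : IsLocallyMinimal G C) :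
    ∑ e ∈ G.edgeFinset, {l : Fin k | ∀ v ∈ e, v ∈ C l}.ncard ≤
      G.edgeFinset.card * G.maxDegree :=
  locallyMinimal_edge_assignments_le_general G C hlm
end

section
/- Let G = (V,E) be a finite simple graph, let 𝒞 = (C_1, …, C_k) be a finite indexed family of cliques of G, and let {x,y} ∈ E be an edge that is uncovered by 𝒞, i.e., {x,y} ⊄ C_l for all l ∈ {1,…,k}. Then R_x ∩ R_y ≠ ∅ if and only if there exists l ∈ {1,…,k} such that C_l ∪ {x,y} is a clique of G. -/
/-- The representative set of a vertex `x` with respect to a finite indexed family of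
cliques `(C_1, …, C_k)` of `G`: the set of indices `l` such that either `x ∈ C_l`, or
`x ∉ C_l` and `C_l ⊆ N(x)`. -/
def repSet {V : Type*} (G : SimpleGraph V) {k : ℕ} (C : Fin k → Finset V) (x : V) :
    Set (Fin k) :=
  {l | x ∈ C l ∨ (x ∉ C l ∧ (C l : Set V) ⊆ G.neighborSet x)}

/-- Let `(C_1, …, C_k)` be a family of cliques of a finite simple graph `G` and let
`{x, y}` be an edge of `G` not covered by any `C_l`. Then `R_x ∩ R_y ≠ ∅` if and only if
there is an index `l` such that `C_l ∪ {x, y}` is a clique of `G` (i.e. the edge `{x, y}`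
can be covered by the clique `C_l`). -/
theorem repSet_inter_nonempty_iff {V : Type*} [Fintype V] [DecidableEq V]
    (G : SimpleGraph V) {k : ℕ} (C : Fin k → Finset V)
    (hclique : ∀ l, G.IsClique (C l : Set V))
    (x y : V) (hadj : G.Adj x y)
    (huncov : ∀ l : Fin k, ¬ (x ∈ C l ∧ y ∈ C l)) :
    (repSet G C x ∩ repSet G C y).Nonempty ↔
      ∃ l : Fin k, G.IsClique ((C l ∪ {x, y} : Finset V) : Set V) := by
  constructor
  · rintro ⟨l, hx, hy⟩
    refine ⟨l, ?_⟩
    -- key: every vertex of C l is adjacent to x (or equals x), same for y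
    have adjx : ∀ z ∈ C l, z ≠ x → G.Adj x z := by
      intro z hz hzx
      rcases hx with h | ⟨_, h⟩
      · exact (hclique l h hz (fun e => hzx e.symm))
      · exact (h hz)
    have adjy : ∀ z ∈ C l, z ≠ y → G.Adj y z := by
      intro z hz hzy
      rcases hy with h | ⟨_, h⟩
      · exact (hclique l h hz (fun e => hzy e.symm))
      · exact (h hz)
    intro u hu v hv huv
    simp only [Finset.coe_union, Finset.coe_insert, Finset.coe_singleton,
      Set.mem_union, Set.mem_insert_iff, Set.mem_singleton_iff] at hu hv
    rcases hu with hu | hu | hu <;> rcases hv with hv | hv | hv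
    · exact hclique l hu hv huv
    · subst hv; exact (adjx u hu huv).symm
    · subst hv; exact (adjy u hu huv).symm
    · subst hu; exact adjx v hv (Ne.symm huv)
    · subst hu; subst hv; exact absurd rfl huv
    · subst hu; subst hv; exact hadj
    · subst hu; exact adjy v hv (Ne.symm huv)
    · subst hu; subst hv; exact hadj.symm
    · subst hu; subst hv; exact absurd rfl huv
  · rintro ⟨l, hl⟩
    have memU : ∀ z ∈ C l, z ∈ ((C l ∪ {x, y} : Finset V) : Set V) := by
      intro z hz; simp [hz]
    have hxU : x ∈ ((C l ∪ {x, y} : Finset V) : Set V) := by simp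
    have hyU : y ∈ ((C l ∪ {x, y} : Finset V) : Set V) := by simp
    refine ⟨l, ?_, ?_⟩
    · by_cases hx : x ∈ C l
      · exact Or.inl hx
      · refine Or.inr ⟨hx, fun z hz => ?_⟩
        exact hl hxU (memU z hz) (fun e => hx (e ▸ hz))
    · by_cases hy : y ∈ C l
      · exact Or.inl hy
      · refine Or.inr ⟨hy, fun z hz => ?_⟩
        exact hl hyU (memU z hz) (fun e => hy (e ▸ hz))
end

section
/- Let 𝒞 = (C_1, …, C_k) be an edge clique cover of a finite simple graph G = (V,E) with m edges and maximum degree Δ, where k ≥ 1. If 𝒞 is locally minimal, then Σ_{x ∈ V} |R_x| < 2m + kΔ. -/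
section AuxLM
variable {V : Type*} [DecidableEq V] {G : SimpleGraph V}

private lemma lmstep_length {cc cc' : List (Finset V)} {x y : V} (h : LMStep G cc x y cc') :
    cc'.length ≤ cc.length + 1 := by
  cases h with
  | covered => omega
  | extend pre post D x y hnc hcl => simp
  | newClique => simp

private lemma lmstep_nonempty {cc cc' : List (Finset V)} {x y : V} (h : LMStep G cc x y cc')
    (hN : ∀ D ∈ cc, D.Nonempty) : ∀ D ∈ cc', D.Nonempty := by
  cases h with
  | covered => exact hN
  | extend pre post D x y hnc hcl =>
      intro D' hD'
      simp only [List.mem_append, List.mem_cons] at hD'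
      rcases hD' with h1 | h1 | h1
      · exact hN D' (by simp [h1])
      · subst h1; exact ⟨x, by simp⟩
      · exact hN D' (by simp [h1])
  | newClique cc x y hnc hext =>
      intro D' hD'
      rcases List.mem_append.mp hD' with h1 | h1
      · exact hN D' h1
      · simp only [List.mem_singleton] at h1; subst h1; exact ⟨x, by simp⟩

private lemma lmrun_length {cc cc' : List (Finset V)} {es : List (Sym2 V)}
    (h : LMRun G cc es cc') : cc'.length ≤ cc.length + es.length := by
  induction h with
  | nil => simp
  | cons cc cc' cc'' x y es hstep hrest ih =>
      have := lmstep_length hstep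
      simp only [List.length_cons]
      omega

private lemma lmrun_nonempty {cc cc' : List (Finset V)} {es : List (Sym2 V)}
    (h : LMRun G cc es cc') (hN : ∀ D ∈ cc, D.Nonempty) : ∀ D ∈ cc', D.Nonempty := by
  induction h with
  | nil => exact hN
  | cons cc cc' cc'' x y es hstep hrest ih => exact ih (lmstep_nonempty hstep hN)

end AuxLM

/-- If an edge clique cover `(C_1, …, C_k)` (with `k ≥ 1`) of a finite simple graph `G`
with `m` edges and maximum degree `Δ` is locally minimal, then the total size of the
representative sets satisfies `Σ_{x ∈ V} |R_x| < 2m + kΔ`. -/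
theorem locallyMinimal_repSet_sum_lt {V : Type*} [Fintype V] [DecidableEq V]
    (G : SimpleGraph V) [DecidableRel G.Adj] {k : ℕ} (hk : 1 ≤ k)
    (C : Fin k → Finset V)
    (hcov : IsEdgeCliqueCover G C) (hlm : IsLocallyMinimal G C) :
    ∑ x : V, (repSet G C x).ncard < 2 * G.edgeFinset.card + k * G.maxDegree := by
  classical
  obtain ⟨es, hnd, hmem, L, hrun, hperm⟩ := hlm
  have hes_len : es.length = G.edgeFinset.card := by
    have hto : es.toFinset = G.edgeFinset := by
      ext e; simp [hmem e, SimpleGraph.mem_edgeFinset]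
    rw [← List.toFinset_card_of_nodup hnd, hto]
  have hLlen : L.length = k := by
    rw [hperm.length_eq, List.length_ofFn]
  have hkm : k ≤ G.edgeFinset.card := by
    have := lmrun_length hrun
    simp only [List.length_nil, hLlen, hes_len, Nat.zero_add] at this
    exact this
  have hm1 : 1 ≤ G.edgeFinset.card := le_trans hk hkm
  have hNE : ∀ l : Fin k, (C l).Nonempty := by
    intro l
    have hmemL : C l ∈ L := hperm.mem_iff.mpr (by
      simp only [List.mem_ofFn]
      exact ⟨l, rfl⟩)
    exact lmrun_nonempty hrun (by simp) (C l) hmemL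
  have hbound : ∀ l : Fin k,
      (Finset.univ.filter
        (fun x : V => x ∈ C l ∨ (x ∉ C l ∧ (C l : Set V) ⊆ G.neighborSet x))).card
        ≤ G.maxDegree + 1 := by
    intro l
    obtain ⟨v, hv⟩ := hNE l
    have hsub : (Finset.univ.filter
        (fun x : V => x ∈ C l ∨ (x ∉ C l ∧ (C l : Set V) ⊆ G.neighborSet x)))
        ⊆ insert v (G.neighborFinset v) := by
      intro x hx
      simp only [Finset.mem_filter, Finset.mem_univ, true_and] at hx
      rcases hx with hx | ⟨hx, hsubN⟩
      · by_cases hxv : x = v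
        · simp [hxv]
        · refine Finset.mem_insert_of_mem ?_
          rw [SimpleGraph.mem_neighborFinset]
          exact hcov.1 l hv hx (fun h => hxv h.symm)
      · refine Finset.mem_insert_of_mem ?_
        rw [SimpleGraph.mem_neighborFinset]
        exact (hsubN hv).symm
    calc (Finset.univ.filter _).card ≤ (insert v (G.neighborFinset v)).card :=
          Finset.card_le_card hsub
      _ ≤ (G.neighborFinset v).card + 1 := Finset.card_insert_le _ _
      _ = G.degree v + 1 := by rw [SimpleGraph.card_neighborFinset_eq_degree]
      _ ≤ G.maxDegree + 1 := Nat.add_le_add_right (G.degree_le_maxDegree v) 1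
  have hsum : ∑ x : V, (repSet G C x).ncard
      = ∑ l : Fin k, (Finset.univ.filter
        (fun x : V => x ∈ C l ∨ (x ∉ C l ∧ (C l : Set V) ⊆ G.neighborSet x))).card := by
    have h1 : ∀ x : V, (repSet G C x).ncard
        = (Finset.univ.filter
          (fun l : Fin k => x ∈ C l ∨ (x ∉ C l ∧ (C l : Set V) ⊆ G.neighborSet x))).card := by
      intro x
      rw [Set.ncard_eq_toFinset_card (repSet G C x) (Set.toFinite _)]
      apply congrArg
      ext l
      simp [repSet]
    simp only [h1, Finset.card_filter]
    exact Finset.sum_comm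
  rw [hsum]
  calc ∑ l : Fin k, (Finset.univ.filter
        (fun x : V => x ∈ C l ∨ (x ∉ C l ∧ (C l : Set V) ⊆ G.neighborSet x))).card
      ≤ ∑ _l : Fin k, (G.maxDegree + 1) := Finset.sum_le_sum (fun l _ => hbound l)
    _ = k * (G.maxDegree + 1) := by simp [Finset.sum_const, mul_comm]
    _ = k * G.maxDegree + k := by ring
    _ < 2 * G.edgeFinset.card + k * G.maxDegree := by omega
end

section
/- Let G* = (V*, E*) be a finite simple graph with n vertices and m edges, let k be a nonnegative integer, and let q ≥ 2m + 1. Let G be the graph obtained from G* by adding q new vertices x_1, …, x_q and joining each x_i to every vertex of V* by an edge (with no edges among the new vertices). Then G* has a vertex clique cover with at most k cliques if and only if G has an edge clique cover 𝒞 = (C_1, …, C_r) with Σ_{l=1}^{r} |C_l| ≤ (n+k)q + 2m. -/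
/-- A vertex clique cover of a simple graph `G` with at most `k` cliques: a family of `k`
(possibly empty) cliques of `G` whose union is the whole vertex set. -/
def IsVertexCliqueCover {V : Type*} (G : SimpleGraph V) {k : ℕ} (D : Fin k → Finset V) : Prop :=
  (∀ l, G.IsClique (D l : Set V)) ∧ ∀ v : V, ∃ l, v ∈ D l

/-- The graph obtained from `G` by adding `q` new vertices `x_1, …, x_q`, joining each
new vertex to every original vertex, with no edges among the new vertices. -/
def addUniversalVertices {V : Type*} (G : SimpleGraph V) (q : ℕ) :
    SimpleGraph (V ⊕ Fin q) :=
  SimpleGraph.fromRel (fun u v =>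
    match u, v with
    | Sum.inl a, Sum.inl b => G.Adj a b
    | Sum.inl _, Sum.inr _ => True
    | _, _ => False)

/-!
Covering the vertices of `G` by `k` cliques is the same as colouring `Gᶜ` with `k` colours.
Given such a colouring, the stars `{x_i} ∪ K`, for all new vertices `x_i` and colour classes `K`,
together with the edges of `G` as 2-cliques, cover the edges of the extended graph with total
size exactly `(n + k)q + 2m`.

Conversely, the new vertices are pairwise non-adjacent, so every clique contains at most one of
them. The cliques through `x_i` cover all of `V`, so if there are `s_i` of them their sizes add
up to at least `n + s_i`; summing over `i` gives `Σ s_i ≤ kq + 2m < (k + 1)q`. Hence some `x_i`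
lies in at most `k` cliques, and their traces on `V` give a colouring of `Gᶜ` with at most `k`
colours.
-/

open Finset

lemma card_add_card_le_sum_card_of_cover {α β ι : Type*} [Fintype α] [DecidableEq α]
    (C : ι → Finset (α ⊕ β)) (S : Finset ι) (hright : ∀ l ∈ S, (C l).toRight.Nonempty)
    (hleft : ∀ a, ∃ l ∈ S, .inl a ∈ C l) :
    Fintype.card α + #S ≤ ∑ l ∈ S, #(C l) := by
  have hcover : (univ : Finset α) ⊆ S.biUnion fun l => (C l).toLeft := fun a _ => by
    obtain ⟨l, hl, ha⟩ := hleft a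
    exact mem_biUnion.2 ⟨l, hl, mem_toLeft.2 ha⟩
  calc Fintype.card α + #S ≤ ∑ l ∈ S, #(C l).toLeft + ∑ l ∈ S, 1 := by
        rw [← card_eq_sum_ones]
        exact Nat.add_le_add_right ((card_le_card hcover).trans card_biUnion_le) _
    _ = ∑ l ∈ S, (#(C l).toLeft + 1) := sum_add_distrib.symm
    _ ≤ ∑ l ∈ S, #(C l) := sum_le_sum fun l hl => by
        rw [← card_toLeft_add_card_toRight]
        exact Nat.add_le_add_left (hright l hl).card_pos _

section addUniversalVertices

variable {V : Type*} {G : SimpleGraph V} {q : ℕ}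

@[simp]
lemma addUniversalVertices_adj_inl_inl {a b : V} :
    (addUniversalVertices G q).Adj (.inl a) (.inl b) ↔ G.Adj a b := by
  simp only [addUniversalVertices, SimpleGraph.fromRel_adj, ne_eq, Sum.inl.injEq]
  exact ⟨fun h => h.2.elim id G.adj_symm, fun h => ⟨h.ne, .inl h⟩⟩

@[simp]
lemma addUniversalVertices_adj_inl_inr {a : V} {i : Fin q} :
    (addUniversalVertices G q).Adj (.inl a) (.inr i) := by
  simp [addUniversalVertices]

@[simp]
lemma addUniversalVertices_adj_inr_inl {a : V} {i : Fin q} :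
    (addUniversalVertices G q).Adj (.inr i) (.inl a) :=
  addUniversalVertices_adj_inl_inr.symm

@[simp]
lemma addUniversalVertices_not_adj_inr_inr {i j : Fin q} :
    ¬ (addUniversalVertices G q).Adj (.inr i) (.inr j) := by
  simp [addUniversalVertices]

lemma isClique_addUniversalVertices_iff {u : Finset (V ⊕ Fin q)} :
    (addUniversalVertices G q).IsClique (u : Set (V ⊕ Fin q)) ↔
      G.IsClique (u.toLeft : Set V) ∧ #u.toRight ≤ 1 := by
  rw [card_le_one]
  constructor
  · intro hu
    refine ⟨fun a ha b hb hab => ?_, fun i hi j hj => ?_⟩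
    · simpa using hu (mem_toLeft.1 ha) (mem_toLeft.1 hb) (by simpa using hab)
    · by_contra hij
      simpa using hu (mem_toRight.1 hi) (mem_toRight.1 hj) (by simpa using hij)
  · rintro ⟨hleft, hright⟩ (a | i) hx (b | j) hy hxy
    · simpa using hleft (mem_toLeft.2 hx) (mem_toLeft.2 hy) (by simpa using hxy)
    · simp
    · simp
    · exact absurd (hright i (mem_toRight.2 hx) j (mem_toRight.2 hy)) (by simpa using hxy)

end addUniversalVertices

section CliqueCovers

variable {V : Type*} {G : SimpleGraph V}

lemma exists_isVertexCliqueCover_iff_colorable_compl [Fintype V] {k : ℕ} :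
    (∃ D : Fin k → Finset V, IsVertexCliqueCover G D) ↔ Gᶜ.Colorable k := by
  constructor
  · rintro ⟨D, hclique, hcover⟩
    choose c hc using hcover
    refine ⟨.mk c fun {u v} huv hcuv => ?_⟩
    rw [SimpleGraph.compl_adj] at huv
    exact huv.2 (hclique (c v) (hcuv ▸ hc u) (hc v) huv.1)
  · rintro ⟨c⟩
    refine ⟨fun l => univ.filter (c · = l), fun l u hu v hv huv => ?_, fun v => ⟨c v, by simp⟩⟩
    simp only [coe_filter, mem_univ, true_and, Set.mem_ofPred_eq] at hu hv
    by_contra hG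
    exact c.valid ((G.compl_adj u v).2 ⟨huv, hG⟩) (hu.trans hv.symm)

lemma exists_isEdgeCliqueCover_of_fintype {ι : Type*} [Fintype ι] {C : ι → Finset V}
    (hclique : ∀ i, G.IsClique (C i : Set V))
    (hcover : ∀ ⦃x y⦄, G.Adj x y → ∃ i, x ∈ C i ∧ y ∈ C i) :
    ∃ (r : ℕ) (C' : Fin r → Finset V), IsEdgeCliqueCover G C' ∧ ∑ l, #(C' l) = ∑ i, #(C i) := by
  let e := Fintype.equivFin ι
  refine ⟨_, C ∘ e.symm, ⟨fun l => hclique _, fun x y hxy => ?_⟩, e.symm.sum_comp fun i => #(C i)⟩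
  obtain ⟨i, hi⟩ := hcover hxy
  exact ⟨e i, by simpa using hi⟩

end CliqueCovers

lemma exists_isEdgeCliqueCover_of_colorable_compl {V : Type*} [Fintype V] [DecidableEq V]
    {G : SimpleGraph V} [DecidableRel G.Adj] {k q : ℕ} (hc : Gᶜ.Colorable k) :
    ∃ (r : ℕ) (C : Fin r → Finset (V ⊕ Fin q)), IsEdgeCliqueCover (addUniversalVertices G q) C ∧
      ∑ l, #(C l) ≤ (Fintype.card V + k) * q + 2 * #G.edgeFinset := by
  obtain ⟨c⟩ := hc
  let colorClass (l : Fin k) : Finset V := univ.filter (c · = l)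
  have hcolorClass (l : Fin k) : G.IsClique (colorClass l : Set V) := by
    simpa [colorClass, SimpleGraph.Coloring.colorClass] using
      (SimpleGraph.isIndepSet_compl _).1 (c.isIndepSet_colorClass l)
  let C : (Fin q × Fin k) ⊕ G.edgeSet → Finset (V ⊕ Fin q) :=
    Sum.elim (fun p => (colorClass p.2).disjSum {p.1}) (fun e => (e : Sym2 V).toFinset.disjSum ∅)
  have hclique (j) : (addUniversalVertices G q).IsClique (C j : Set (V ⊕ Fin q)) := by
    rw [isClique_addUniversalVertices_iff]
    rcases j with ⟨i, l⟩ | ⟨e, he⟩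
    · simpa [C] using hcolorClass l
    · simp only [C, Sum.elim_inr, toLeft_disjSum, toRight_disjSum, card_empty, zero_le, and_true]
      induction e using Sym2.ind with
      | _ a b => simpa [Sym2.toFinset_mk_eq, SimpleGraph.isClique_pair] using fun _ => he
  have hcover : ∀ ⦃x y⦄, (addUniversalVertices G q).Adj x y → ∃ j, x ∈ C j ∧ y ∈ C j := by
    rintro (a | i) (b | j) hxy
    · exact ⟨.inr ⟨s(a, b), by simpa using hxy⟩, by simp [C]⟩
    · exact ⟨.inl (j, c a), by simp [C, colorClass]⟩
    · exact ⟨.inl (i, c b), by simp [C, colorClass]⟩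
    · simp at hxy
  have hcolorClass_card : ∑ l, #(colorClass l) = Fintype.card V :=
    (card_eq_sum_card_fiberwise fun v _ => mem_univ (c v)).symm
  have hedge_card (e : G.edgeSet) : #(e : Sym2 V).toFinset = 2 :=
    Sym2.card_toFinset_of_not_isDiag _ (G.not_isDiag_of_mem_edgeSet e.2)
  have hcard : ∑ j, #(C j) = (Fintype.card V + k) * q + 2 * #G.edgeFinset := by
    simp only [C, Fintype.sum_sum_type, Sum.elim_inl, Sum.elim_inr, card_disjSum, card_singleton,
      card_empty, add_zero, hedge_card, Fintype.sum_prod_type, sum_add_distrib, hcolorClass_card]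
    simp [SimpleGraph.edgeFinset_card]
    ring
  obtain ⟨r, C', hC', hsum⟩ := exists_isEdgeCliqueCover_of_fintype hclique hcover
  exact ⟨r, C', hC', (hsum.trans hcard).le⟩

section CliquesThrough

variable {V : Type*} [DecidableEq V] {G : SimpleGraph V} {q r : ℕ} {C : Fin r → Finset (V ⊕ Fin q)}

def cliquesThrough (C : Fin r → Finset (V ⊕ Fin q)) (i : Fin q) : Finset (Fin r) :=
  univ.filter (.inr i ∈ C ·)

lemma mul_card_add_sum_card_cliquesThrough_le [Fintype V]
    (hC : IsEdgeCliqueCover (addUniversalVertices G q) C) :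
    q * Fintype.card V + ∑ i, #(cliquesThrough C i) ≤ ∑ l, #(C l) := by
  have hdisj : (↑(univ : Finset (Fin q)) : Set (Fin q)).PairwiseDisjoint (cliquesThrough C) := by
    intro i _ j _ hij
    refine disjoint_left.2 fun l hli hlj => hij ?_
    simp only [cliquesThrough, mem_filter, mem_univ, true_and] at hli hlj
    exact card_le_one.1 (isClique_addUniversalVertices_iff.1 (hC.1 l)).2 i (mem_toRight.2 hli) j
      (mem_toRight.2 hlj)
  have hstar (i : Fin q) :
      Fintype.card V + #(cliquesThrough C i) ≤ ∑ l ∈ cliquesThrough C i, #(C l) := by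
    refine card_add_card_le_sum_card_of_cover C _ (fun l hl => ⟨i, ?_⟩) fun a => ?_
    · simpa [cliquesThrough] using hl
    · obtain ⟨l, ha, hi⟩ := hC.2 (addUniversalVertices_adj_inl_inr (a := a) (i := i))
      exact ⟨l, by simpa [cliquesThrough] using hi, ha⟩
  calc q * Fintype.card V + ∑ i, #(cliquesThrough C i)
      = ∑ i, (Fintype.card V + #(cliquesThrough C i)) := by simp [sum_add_distrib]
    _ ≤ ∑ i, ∑ l ∈ cliquesThrough C i, #(C l) := sum_le_sum fun i _ => hstar i
    _ = ∑ l ∈ univ.biUnion (cliquesThrough C), #(C l) := (sum_biUnion hdisj).symm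
    _ ≤ ∑ l, #(C l) := sum_le_sum_of_subset (subset_univ _)

lemma exists_card_cliquesThrough_le [Fintype V] [DecidableRel G.Adj] {k : ℕ}
    (hq : 2 * #G.edgeFinset + 1 ≤ q) (hC : IsEdgeCliqueCover (addUniversalVertices G q) C)
    (hsum : ∑ l, #(C l) ≤ (Fintype.card V + k) * q + 2 * #G.edgeFinset) :
    ∃ i, #(cliquesThrough C i) ≤ k := by
  have h := mul_card_add_sum_card_cliquesThrough_le hC
  have hlt : ∑ i, #(cliquesThrough C i) < ∑ _i : Fin q, (k + 1) := by
    simp only [sum_const, card_univ, Fintype.card_fin, smul_eq_mul]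
    nlinarith
  obtain ⟨i, -, hi⟩ := exists_lt_of_sum_lt hlt
  exact ⟨i, Nat.lt_succ_iff.1 hi⟩

lemma colorable_compl_card_cliquesThrough (hC : IsEdgeCliqueCover (addUniversalVertices G q) C)
    (i : Fin q) : Gᶜ.Colorable #(cliquesThrough C i) := by
  have hmem (v : V) : ∃ l ∈ cliquesThrough C i, .inl v ∈ C l := by
    obtain ⟨l, hv, hi⟩ := hC.2 (addUniversalVertices_adj_inl_inr (a := v) (i := i))
    exact ⟨l, by simpa [cliquesThrough] using hi, hv⟩
  choose c hc hcv using hmem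
  let c' : Gᶜ.Coloring (cliquesThrough C i) := .mk (fun v => ⟨c v, hc v⟩) fun {u v} huv hcuv => by
    rw [SimpleGraph.compl_adj] at huv
    have hu : u ∈ (C (c v)).toLeft := mem_toLeft.2 (Subtype.mk.inj hcuv ▸ hcv u)
    exact huv.2 ((isClique_addUniversalVertices_iff.1 (hC.1 (c v))).1 hu (mem_toLeft.2 (hcv v))
      huv.1)
  simpa using c'.colorable

end CliquesThrough

/-- The Kou–Stockmeyer–Wong style reduction underlying NP-completeness of Assignment
Clique Cover: let `G*` be a finite simple graph with `n` vertices and `m` edges, let `k`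
be a nonnegative integer and `q ≥ 2m + 1`, and let `G` be obtained from `G*` by adding `q`
new vertices joined to every vertex of `G*`. Then `G*` has a vertex clique cover with at
most `k` cliques iff `G` has an edge clique cover `(C_1, …, C_r)` with
`Σ_l |C_l| ≤ (n + k)q + 2m`. -/
theorem vertexCliqueCover_iff_assignment_bound {V : Type*} [Fintype V] [DecidableEq V]
    (G : SimpleGraph V) [DecidableRel G.Adj] (k q : ℕ)
    (hq : 2 * G.edgeFinset.card + 1 ≤ q) :
    (∃ D : Fin k → Finset V, IsVertexCliqueCover G D) ↔
      (∃ (r : ℕ) (C : Fin r → Finset (V ⊕ Fin q)),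
        IsEdgeCliqueCover (addUniversalVertices G q) C ∧
        ∑ l, (C l).card ≤ (Fintype.card V + k) * q + 2 * G.edgeFinset.card) := by
  rw [exists_isVertexCliqueCover_iff_colorable_compl]
  refine ⟨exists_isEdgeCliqueCover_of_colorable_compl, ?_⟩
  rintro ⟨r, C, hC, hsum⟩
  obtain ⟨i, hi⟩ := exists_card_cliquesThrough_le hq hC hsum
  exact (colorable_compl_card_cliquesThrough hC i).mono hi
end
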